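/- arXiv:2409.01070 — 2 statements merged into one kernel-verified Lean document; each statement's English description precedes it below -/
import Mathlib

section
/- Let Ω ⊂ ℂ̂ be a multiply connected domain of connectivity greater than two, and let π : 𝔻 → Ω be a universal covering with deck transformation group Γ. If the radial limit π*(e^{iθ}) of π at e^{iθ} ∈ ∂𝔻 exists, then e^{iθ} ∈ ∂𝔻 ∖ Λ_NT. -/
/-!
Suppose deck transformations `γₙ` send `0` to points tending to `ζ` inside a Stolz angle. The
radial points `‖γₙ 0‖ ζ` stay within bounded pseudo-hyperbolic distance of `γₙ 0`, so by the
Schwarz–Pick lemma for `γₙ⁻¹` their images under `π` lie in the image of a fixed compact disk,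
a compact subset of `Ω`; hence the radial limit lies in `Ω`. But a curve converging to a point of
`Ω` lifts through the covering to a curve converging inside `𝔻`, whereas the radius ends on `∂𝔻`.
-/

open Complex Metric Set Filter Topology OnePoint MeasureTheory

noncomputable section

/-- The Riemann sphere, modelled as the one-point compactification of `ℂ`. -/
abbrev RSphere : Type := OnePoint ℂ

/-- The open unit disk `𝔻` as a subset of `ℂ`. -/
def unitD : Set ℂ := Metric.ball 0 1

/-- The unit circle `∂𝔻`. -/
def unitC : Set ℂ := Metric.sphere 0 1

/-- A map into the Riemann sphere is holomorphic (meromorphic) at `z` if near `z` it is either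
given by an analytic `ℂ`-valued function, or its reciprocal is (with value `∞` at zeros). -/
def SphHolomorphicAt (f : ℂ → RSphere) (z : ℂ) : Prop :=
  (∃ g : ℂ → ℂ, AnalyticAt ℂ g z ∧ ∀ᶠ w in 𝓝 z, f w = (g w : RSphere)) ∨
  (∃ g : ℂ → ℂ, AnalyticAt ℂ g z ∧ g z = 0 ∧
     ∀ᶠ w in 𝓝 z, (g w = 0 → f w = ∞) ∧ (g w ≠ 0 → f w = (((g w)⁻¹ : ℂ) : RSphere)))

def SphHolomorphicOn (f : ℂ → RSphere) (s : Set ℂ) : Prop :=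
  ∀ z ∈ s, SphHolomorphicAt f z

/-- A domain: an open connected subset of the Riemann sphere. -/
structure IsSphDomain (Ω : Set RSphere) : Prop where
  isOpen : IsOpen Ω
  isConnected : IsConnected Ω

/-- A hyperbolic domain: omits at least three points of the sphere. -/
def IsHyperbolicDomain (Ω : Set RSphere) : Prop :=
  IsSphDomain Ω ∧ ∃ a b c : RSphere, a ∉ Ω ∧ b ∉ Ω ∧ c ∉ Ω ∧ a ≠ b ∧ a ≠ c ∧ b ≠ c

/-- Multiply connected: the complement has more than one connected component. -/
def IsMultiplyConnected (Ω : Set RSphere) : Prop :=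
  ∃ x ∈ Ωᶜ, ∃ y ∈ Ωᶜ, connectedComponentIn Ωᶜ x ≠ connectedComponentIn Ωᶜ y

/-- Connectivity greater than two: the complement has at least three connected components. -/
def ConnectivityGtTwo (Ω : Set RSphere) : Prop :=
  ∃ x ∈ Ωᶜ, ∃ y ∈ Ωᶜ, ∃ z ∈ Ωᶜ,
    connectedComponentIn Ωᶜ x ≠ connectedComponentIn Ωᶜ y ∧
    connectedComponentIn Ωᶜ x ≠ connectedComponentIn Ωᶜ z ∧
    connectedComponentIn Ωᶜ y ≠ connectedComponentIn Ωᶜ z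

/-- A universal covering `π : 𝔻 → Ω`: a holomorphic surjective covering map of `Ω`
defined on the (simply connected) unit disk. -/
structure IsUniversalCovering (f : ℂ → RSphere) (Ω : Set RSphere) : Prop where
  mapsTo : MapsTo f unitD Ω
  surjOn : SurjOn f unitD Ω
  holo : SphHolomorphicOn f unitD
  covering : IsCoveringMap (fun z : unitD => (⟨f z.1, mapsTo z.2⟩ : Ω))

/-- A deck transformation of the covering `f`: a holomorphic automorphism `γ` of `𝔻`
with `f ∘ γ = f`. -/
structure IsDeckTransformation (f : ℂ → RSphere) (γ : ℂ → ℂ) : Prop where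
  bijOn : BijOn γ unitD unitD
  holo : DifferentiableOn ℂ γ unitD
  deck : ∀ z ∈ unitD, f (γ z) = f z

/-- The Stolz angle `A_{α,ρ}(ζ)` at `ζ ∈ ∂𝔻`. -/
def stolzAngle (ζ : ℂ) (α ρ : ℝ) : Set ℂ :=
  {z | z ∈ unitD ∧ |Complex.arg ζ - Complex.arg (ζ - z)| < α ∧ ‖ζ - z‖ < ρ}

/-- The limit set `Λ` of the deck transformation group of `f`. -/
def limitSet (f : ℂ → RSphere) : Set ℂ :=
  {ζ | ζ ∈ unitC ∧ ∃ γ : ℕ → ℂ → ℂ, (∀ n, IsDeckTransformation f (γ n)) ∧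
    Tendsto (fun n => γ n 0) atTop (𝓝 ζ)}

/-- The non-tangential limit set of a family `S` of disk automorphisms. -/
def ntLimitSetOf (S : Set (ℂ → ℂ)) : Set ℂ :=
  {ζ | ζ ∈ unitC ∧ ∃ γ : ℕ → ℂ → ℂ, (∀ n, γ n ∈ S) ∧
    Tendsto (fun n => γ n 0) atTop (𝓝 ζ) ∧
    ∃ α ρ : ℝ, 0 < α ∧ α < Real.pi / 2 ∧ 0 < ρ ∧ ∀ n, γ n 0 ∈ stolzAngle ζ α ρ}

/-- The non-tangential limit set `Λ_NT` of the deck transformation group of `f`. -/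
def ntLimitSet (f : ℂ → RSphere) : Set ℂ :=
  ntLimitSetOf {γ | IsDeckTransformation f γ}

/-- The radial limit of `f` at `ζ ∈ ∂𝔻` equals `L`. -/
def radialLimitAt (f : ℂ → RSphere) (ζ : ℂ) (L : RSphere) : Prop :=
  Tendsto (fun t : ℝ => f ((t : ℂ) * ζ)) (𝓝[<] (1 : ℝ)) (𝓝 L)

/-- The radial limit of `f` at `ζ` exists. -/
def HasRadialLimit (f : ℂ → RSphere) (ζ : ℂ) : Prop :=
  ∃ L : RSphere, radialLimitAt f ζ L

/-- A curve `η : [0,1) → 𝔻` lands at `ζ`. -/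
def LandsAt (η : ℝ → ℂ) (ζ : ℂ) : Prop :=
  ContinuousOn η (Ico (0:ℝ) 1) ∧ MapsTo η (Ico (0:ℝ) 1) unitD ∧
    Tendsto η (𝓝[<] (1:ℝ)) (𝓝 ζ)

/-- A curve lands non-tangentially at `ζ`: it lands at `ζ` and is eventually contained
in some Stolz angle at `ζ`. -/
def LandsNontangentiallyAt (η : ℝ → ℂ) (ζ : ℂ) : Prop :=
  LandsAt η ζ ∧ ∃ α ρ : ℝ, 0 < α ∧ α < Real.pi / 2 ∧ 0 < ρ ∧
    ∀ᶠ t in 𝓝[<] (1:ℝ), η t ∈ stolzAngle ζ α ρ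

/-- The cluster set of `f` along the curve `η`. -/
def clusterAlong (f : ℂ → RSphere) (η : ℝ → ℂ) : Set RSphere :=
  {w | ∃ t : ℕ → ℝ, (∀ n, t n ∈ Ico (0:ℝ) 1) ∧ Tendsto t atTop (𝓝 1) ∧
    Tendsto (fun n => f (η (t n))) atTop (𝓝 w)}

/-- The radial cluster set of `f` at `ζ`. -/
def radialCluster (f : ℂ → RSphere) (ζ : ℂ) : Set RSphere :=
  clusterAlong f (fun t => (t : ℂ) * ζ)

/-- The angular cluster set of `f` at `ζ`: union of cluster sets along all curves
landing non-tangentially at `ζ`. -/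
def angularCluster (f : ℂ → RSphere) (ζ : ℂ) : Set RSphere :=
  ⋃ η ∈ {η : ℝ → ℂ | LandsNontangentiallyAt η ζ}, clusterAlong f η

/-- `ζ ∈ ∂𝔻` is of escaping type: the image of the radius at `ζ` eventually leaves
every compact subset of `Ω`. -/
def EscapingType (f : ℂ → RSphere) (Ω : Set RSphere) (ζ : ℂ) : Prop :=
  ∀ K : Set RSphere, IsCompact K → K ⊆ Ω → ∀ᶠ (t : ℝ) in 𝓝[<] (1:ℝ), f ((t:ℂ) * ζ) ∉ K

/-- `ζ ∈ ∂𝔻` is of bounded type: the image of the radius is compactly contained in `Ω`. -/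
def BoundedType (f : ℂ → RSphere) (Ω : Set RSphere) (ζ : ℂ) : Prop :=
  ∃ K : Set RSphere, IsCompact K ∧ K ⊆ Ω ∧ ∀ t ∈ Ico (0:ℝ) 1, f ((t:ℂ) * ζ) ∈ K

/-- `ζ ∈ ∂𝔻` is of bungee type: neither escaping nor bounded. -/
def BungeeType (f : ℂ → RSphere) (Ω : Set RSphere) (ζ : ℂ) : Prop :=
  ¬ EscapingType f Ω ζ ∧ ¬ BoundedType f Ω ζ

/-- A boundary component of `Ω`: a connected component of `∂Ω`. -/
def IsBoundaryComponent (Ω B : Set RSphere) : Prop :=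
  ∃ x ∈ frontier Ω, B = connectedComponentIn (frontier Ω) x

/-- An isolated boundary component: it has a neighbourhood disjoint from all other
boundary components. -/
def IsIsolatedBoundaryComponent (Ω B : Set RSphere) : Prop :=
  IsBoundaryComponent Ω B ∧ ∃ U : Set RSphere, IsOpen U ∧ B ⊆ U ∧ U ∩ frontier Ω ⊆ B

/-- The landing set of a curve `η : [0,1) → ℂ̂`. -/
def landingSet (η : ℝ → RSphere) : Set RSphere :=
  {w | ∃ t : ℕ → ℝ, (∀ n, t n ∈ Ico (0:ℝ) 1) ∧ Tendsto t atTop (𝓝 1) ∧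
    Tendsto (fun n => η (t n)) atTop (𝓝 w)}

/-- `p ∈ ∂Ω` is accessible from `Ω`: some curve in `Ω` lands at `p`. -/
def AccessiblePoint (Ω : Set RSphere) (p : RSphere) : Prop :=
  p ∈ frontier Ω ∧ ∃ η : ℝ → RSphere, ContinuousOn η (Ico (0:ℝ) 1) ∧
    MapsTo η (Ico (0:ℝ) 1) Ω ∧ Tendsto η (𝓝[<] (1:ℝ)) (𝓝 p)

/-- `ζ ∈ ∂𝔻` is an ambiguous point for `f`: two curves landing at `ζ` have disjoint
cluster sets. -/
def AmbiguousPoint (f : ℂ → RSphere) (ζ : ℂ) : Prop :=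
  ζ ∈ unitC ∧ ∃ η₁ η₂ : ℝ → ℂ, LandsAt η₁ ζ ∧ LandsAt η₂ ζ ∧
    clusterAlong f η₁ ∩ clusterAlong f η₂ = ∅

/-- A true crosscut of `Ω`: an open Jordan arc in `Ω` with two distinct endpoints on the
same boundary component of `Ω`, splitting `Ω` into exactly two connected components,
exactly one of which is simply connected. -/
def IsTrueCrosscut (Ω C : Set RSphere) : Prop :=
  C ⊆ Ω ∧
  (∃ g : ℝ → RSphere, ContinuousOn g (Icc (0:ℝ) 1) ∧ InjOn g (Icc (0:ℝ) 1) ∧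
     C = g '' Ioo (0:ℝ) 1 ∧ g 0 ∈ frontier Ω ∧
     g 1 ∈ connectedComponentIn (frontier Ω) (g 0) ∧ g 0 ≠ g 1) ∧
  (∃ u ∈ Ω \ C, ∃ v ∈ Ω \ C,
     connectedComponentIn (Ω \ C) u ≠ connectedComponentIn (Ω \ C) v ∧
     (∀ w ∈ Ω \ C, connectedComponentIn (Ω \ C) w = connectedComponentIn (Ω \ C) u ∨
        connectedComponentIn (Ω \ C) w = connectedComponentIn (Ω \ C) v) ∧
     SimplyConnectedSpace ↥(connectedComponentIn (Ω \ C) u) ∧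
     ¬ SimplyConnectedSpace ↥(connectedComponentIn (Ω \ C) v))

/-- `N` is the true crosscut neighbourhood of the true crosscut `C` in `Ω`: the simply
connected component of `Ω ∖ C`. -/
def IsTrueCrosscutNbhd (Ω C N : Set RSphere) : Prop :=
  IsTrueCrosscut Ω C ∧ (∃ u ∈ Ω \ C, N = connectedComponentIn (Ω \ C) u) ∧
    SimplyConnectedSpace ↥N

/-- A Cantor subset of the unit circle: nonempty, compact, perfect and totally
disconnected. -/
def IsCantorSubsetOfCircle (S : Set ℂ) : Prop :=
  S ⊆ unitC ∧ S.Nonempty ∧ IsCompact S ∧ Perfect S ∧ IsTotallyDisconnected S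

/-- `ζ ∈ ∂𝔻` is a parabolic fixed point of the deck transformation group of `f`:
it is the unique fixed point in the closed disk of (the continuous extension of) some
deck transformation, which has no fixed point in `𝔻`. -/
def IsParabolicFixedPoint (f : ℂ → RSphere) (ζ : ℂ) : Prop :=
  ζ ∈ unitC ∧ ∃ γ γe : ℂ → ℂ, IsDeckTransformation f γ ∧
    ContinuousOn γe (Metric.closedBall (0:ℂ) 1) ∧ EqOn γe γ unitD ∧
    MapsTo γe (Metric.closedBall (0:ℂ) 1) (Metric.closedBall (0:ℂ) 1) ∧
    (∀ z ∈ unitD, γe z ≠ z) ∧ γe ζ = ζ ∧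
    (∀ w ∈ Metric.closedBall (0:ℂ) 1, γe w = w → w = ζ)

/-- The subgroup of deck transformations generated by a family `F` (as functions acting
on the disk). -/
inductive DeckGen (f : ℂ → RSphere) (F : Set (ℂ → ℂ)) : (ℂ → ℂ) → Prop where
  | of (γ : ℂ → ℂ) (h : γ ∈ F) : DeckGen f F γ
  | one : DeckGen f F id
  | mul (γ₁ γ₂ : ℂ → ℂ) (h₁ : DeckGen f F γ₁) (h₂ : DeckGen f F γ₂) : DeckGen f F (γ₁ ∘ γ₂)
  | inv (γ δ : ℂ → ℂ) (h : DeckGen f F γ) (hδ : IsDeckTransformation f δ)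
      (hinv : ∀ z ∈ unitD, δ (γ z) = z) : DeckGen f F δ

theorem Complex.exists_analyticAt_pow_eq {h : ℂ → ℂ} {x : ℂ} (hh : AnalyticAt ℂ h x)
    (hx : h x ≠ 0) {n : ℕ} (hn : n ≠ 0) :
    ∃ ρ : ℂ → ℂ, AnalyticAt ℂ ρ x ∧ ∀ᶠ z in 𝓝 x, ρ z ^ n = h z := by
  obtain ⟨c, hc⟩ := IsAlgClosed.exists_pow_nat_eq (h x) (Nat.pos_of_ne_zero hn)
  have hnC : (n : ℂ) ≠ 0 := Nat.cast_ne_zero.2 hn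
  refine ⟨fun z => c * exp (log (h z / h x) / n), ?_, ?_⟩
  · refine analyticAt_const.mul ((((hh.div analyticAt_const hx).clog ?_).div analyticAt_const
      hnC).cexp)
    simp [hx, one_mem_slitPlane]
  · filter_upwards [hh.continuousAt.eventually_ne hx] with z hz
    rw [mul_pow, ← exp_nat_mul, mul_div_cancel₀ _ hnC, exp_log (div_ne_zero hz hx), hc]
    field_simp

theorem Complex.not_injOn_pow {s : Set ℂ} (hs : s ∈ 𝓝 0) {n : ℕ} (hn : 2 ≤ n) :
    ¬ InjOn (· ^ n) s := by
  intro hinj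
  have hω := isPrimitiveRoot_exp n (by omega)
  set ω := exp (2 * Real.pi * I / n)
  have hs' : ∀ᶠ ξ in 𝓝 (0 : ℂ), ξ ∈ s := hs
  have hωs : ∀ᶠ ξ in 𝓝 (0 : ℂ), ξ * ω ∈ s :=
    (continuous_mul_const ω).tendsto' 0 0 (zero_mul ω) hs
  obtain ⟨ξ, ⟨hξs, hξωs⟩, hξ⟩ :=
    ((hs'.and hωs).filter_mono nhdsWithin_le_nhds |>.and self_mem_nhdsWithin).exists
      (f := 𝓝[≠] (0 : ℂ))
  have hpow : ξ ^ n = (ξ * ω) ^ n := by rw [mul_pow, hω.pow_eq_one, mul_one]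
  have hξω : ξ * ω = ξ * 1 := by rw [mul_one]; exact (hinj hξs hξωs hpow).symm
  exact hω.ne_one (by omega) (mul_left_cancel₀ hξ hξω)

theorem not_injOn_of_eventually_eq_add_pow {g φ : ℂ → ℂ} {x φ' : ℂ} {n : ℕ} (hn : 2 ≤ n)
    (hφ : HasStrictDerivAt φ φ' x) (hφ' : φ' ≠ 0) (hφx : φ x = 0)
    (hg : ∀ᶠ z in 𝓝 x, g z = g x + φ z ^ n) {s : Set ℂ} (hs : s ∈ 𝓝 x) : ¬ InjOn g s := by
  intro hinj
  have hmap : φ '' {z | g z = g x + φ z ^ n ∧ z ∈ s} ∈ 𝓝 0 := by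
    rw [← hφx, ← hφ.map_nhds_eq hφ']
    exact image_mem_map (hg.and hs)
  refine Complex.not_injOn_pow hmap hn ?_
  rintro _ ⟨z₁, ⟨hg₁, hz₁⟩, rfl⟩ _ ⟨z₂, ⟨hg₂, hz₂⟩, rfl⟩ hpow
  have : g z₁ = g z₂ := by rw [hg₁, hg₂]; exact congrArg (g x + ·) hpow
  rw [hinj hz₁ hz₂ this]

/-- If `deriv g x = 0`, then `g - g x` has order `n ≥ 2` at `x`, so it is the `n`-th power of a
local coordinate and `g` is `n`-to-one near `x`. -/
theorem AnalyticAt.deriv_ne_zero_of_injOn {g : ℂ → ℂ} {x : ℂ} {s : Set ℂ} (hg : AnalyticAt ℂ g x)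
    (hs : s ∈ 𝓝 x) (hinj : InjOn g s) : deriv g x ≠ 0 := by
  intro hder
  have htop : analyticOrderAt (g · - g x) x ≠ ⊤ := by
    intro htop
    obtain ⟨z, ⟨hgz, hzs⟩, hzx⟩ :=
      (((analyticOrderAt_eq_top.1 htop).and hs).filter_mono nhdsWithin_le_nhds |>.and
        self_mem_nhdsWithin).exists (f := 𝓝[≠] x)
    exact hzx (hinj hzs (mem_of_mem_nhds hs) (sub_eq_zero.1 hgz))
  obtain ⟨n, horder⟩ := ENat.ne_top_iff_exists.1 htop
  symm at horder
  have hn : 2 ≤ n := by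
    have h1 : 1 ≤ analyticOrderAt (deriv g) x :=
      Order.one_le_iff_ne_zero.2 (analyticOrderAt_ne_zero.2 ⟨hg.deriv, hder⟩)
    have : ((2 : ℕ) : ℕ∞) ≤ n := by
      rw [← horder, ← hg.analyticOrderAt_deriv_add_one]; exact add_le_add_left h1 1
    exact_mod_cast this
  obtain ⟨h, hh, hhx, hfac⟩ := (hg.fun_sub analyticAt_const).analyticOrderAt_eq_natCast.1 horder
  obtain ⟨ρ, hρ, hρn⟩ := Complex.exists_analyticAt_pow_eq hh hhx (n := n) (by omega)
  have hρx : ρ x ≠ 0 := fun h0 => hhx (by rw [← hρn.self_of_nhds, h0, zero_pow (by omega)])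
  have hφ : HasStrictDerivAt (fun z => (z - x) * ρ z) (ρ x) x := by
    have hd : HasDerivAt (fun z => (z - x) * ρ z) (ρ x) x := by
      simpa using ((hasDerivAt_id x).sub_const x).fun_mul hρ.differentiableAt.hasDerivAt
    have hφa : AnalyticAt ℂ (fun z => (z - x) * ρ z) x := by fun_prop
    exact hd.deriv ▸ hφa.hasStrictDerivAt
  refine not_injOn_of_eventually_eq_add_pow hn hφ hρx (by simp) ?_ hs hinj
  filter_upwards [hfac, hρn] with z hz hρz
  rw [mul_pow, hρz, ← smul_eq_mul, ← hz]
  ring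

theorem DifferentiableOn.differentiableOn_invFunOn {γ : ℂ → ℂ} {U V : Set ℂ} (hU : IsOpen U)
    (hγ : DifferentiableOn ℂ γ U) (hbij : BijOn γ U V) :
    DifferentiableOn ℂ (Function.invFunOn γ U) V := by
  intro w hw
  obtain ⟨z, hz, rfl⟩ := hbij.surjOn hw
  have hγz : AnalyticAt ℂ γ z := hγ.analyticAt (hU.mem_nhds hz)
  have hleft : ∀ᶠ y in 𝓝 z, Function.invFunOn γ U (γ y) = y := by
    filter_upwards [hU.mem_nhds hz] with y hy using hbij.injOn.leftInvOn_invFunOn hy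
  exact (hγz.hasStrictDerivAt.to_local_left_inverse
    (hγz.deriv_ne_zero_of_injOn (hU.mem_nhds hz) hbij.injOn) hleft).hasDerivAt
    |>.differentiableAt.differentiableWithinAt

open ComplexConjugate

def diskInvolution (a z : ℂ) : ℂ := (a - z) / (1 - conj a * z)

theorem normSq_one_sub_conj_mul (a b : ℂ) :
    normSq (1 - conj a * b) = normSq (a - b) + (1 - normSq a) * (1 - normSq b) := by
  simp only [normSq_apply, sub_re, sub_im, mul_re, mul_im, one_re, one_im, conj_re, conj_im]
  ring

section diskInvolution

variable {a z : ℂ}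

theorem one_sub_conj_mul_ne_zero (ha : a ∈ ball (0 : ℂ) 1) (hz : z ∈ ball (0 : ℂ) 1) :
    1 - conj a * z ≠ 0 := by
  rw [mem_ball_zero_iff] at ha hz
  refine sub_ne_zero.2 fun h => ?_
  have : ‖conj a * z‖ < 1 := by
    rw [norm_mul, norm_conj]
    nlinarith [norm_nonneg a, norm_nonneg z]
  rw [← h, norm_one] at this
  exact lt_irrefl _ this

theorem diskInvolution_mem_ball (ha : a ∈ ball (0 : ℂ) 1) (hz : z ∈ ball (0 : ℂ) 1) :
    diskInvolution a z ∈ ball (0 : ℂ) 1 := by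
  have hsq : ∀ w : ℂ, w ∈ ball (0 : ℂ) 1 ↔ normSq w < 1 := fun w => by
    rw [mem_ball_zero_iff, ← sq_lt_one_iff₀ (norm_nonneg w), Complex.sq_norm]
  rw [hsq, diskInvolution, normSq_div, div_lt_one (normSq_pos.2 (one_sub_conj_mul_ne_zero ha hz)),
    normSq_one_sub_conj_mul]
  have ha' := (hsq a).1 ha
  have hz' := (hsq z).1 hz
  nlinarith

@[simp]
theorem diskInvolution_self (a : ℂ) : diskInvolution a a = 0 := by simp [diskInvolution]

@[simp]
theorem diskInvolution_zero (a : ℂ) : diskInvolution a 0 = a := by simp [diskInvolution]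

theorem diskInvolution_diskInvolution (ha : a ∈ ball (0 : ℂ) 1) (hz : z ∈ ball (0 : ℂ) 1) :
    diskInvolution a (diskInvolution a z) = z := by
  have h₁ := one_sub_conj_mul_ne_zero ha hz
  have h₂ := one_sub_conj_mul_ne_zero ha (diskInvolution_mem_ball ha hz)
  have h₁' : 1 - z * conj a ≠ 0 := by rwa [mul_comm]
  simp only [diskInvolution] at h₂ ⊢
  rw [div_eq_iff h₂]
  field_simp
  ring

theorem differentiableOn_diskInvolution (ha : a ∈ ball (0 : ℂ) 1) :
    DifferentiableOn ℂ (diskInvolution a) (ball 0 1) :=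
  ((differentiableOn_const a).sub differentiableOn_id).div
    ((differentiableOn_const 1).sub ((differentiableOn_const _).mul differentiableOn_id))
    fun _ hz => one_sub_conj_mul_ne_zero ha hz

end diskInvolution

/-- Schwarz–Pick lemma, `‖diskInvolution u v‖` being the pseudo-hyperbolic distance. -/
theorem norm_diskInvolution_le_of_mapsTo {g : ℂ → ℂ} (hd : DifferentiableOn ℂ g (ball 0 1))
    (hm : MapsTo g (ball 0 1) (ball 0 1)) {u v : ℂ} (hu : u ∈ ball (0 : ℂ) 1)
    (hv : v ∈ ball (0 : ℂ) 1) :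
    ‖diskInvolution (g u) (g v)‖ ≤ ‖diskInvolution u v‖ := by
  set h := fun z => diskInvolution (g u) (g (diskInvolution u z))
  have hmaps : MapsTo (fun z => g (diskInvolution u z)) (ball 0 1) (ball 0 1) :=
    fun z hz => hm (diskInvolution_mem_ball hu hz)
  have hhd : DifferentiableOn ℂ h (ball 0 1) :=
    (differentiableOn_diskInvolution (hm hu)).comp
      (hd.comp (differentiableOn_diskInvolution hu) fun z hz => diskInvolution_mem_ball hu hz)
      hmaps
  have hhm : MapsTo h (ball 0 1) (closedBall 0 1) :=
    fun z hz => ball_subset_closedBall (diskInvolution_mem_ball (hm hu) (hmaps hz))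
  have := norm_le_norm_of_mapsTo_ball hhd hhm (by simp [h]) (mem_ball_zero_iff.1
    (diskInvolution_mem_ball hu hv))
  simpa [h, diskInvolution_diskInvolution hu hv] using this

theorem exists_preimage_norm_le_norm_diskInvolution {γ : ℂ → ℂ}
    (hγ : DifferentiableOn ℂ γ (ball 0 1)) (hbij : BijOn γ (ball 0 1) (ball 0 1)) {w : ℂ}
    (hw : w ∈ ball (0 : ℂ) 1) :
    ∃ u ∈ ball (0 : ℂ) 1, γ u = w ∧ ‖u‖ ≤ ‖diskInvolution w (γ 0)‖ := by
  have hδ0 : Function.invFunOn γ (ball 0 1) (γ 0) = 0 :=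
    hbij.injOn.leftInvOn_invFunOn (mem_ball_self one_pos)
  refine ⟨Function.invFunOn γ (ball 0 1) w, hbij.surjOn.mapsTo_invFunOn hw,
    hbij.surjOn.rightInvOn_invFunOn hw, ?_⟩
  have := norm_diskInvolution_le_of_mapsTo (hγ.differentiableOn_invFunOn isOpen_ball hbij)
    hbij.surjOn.mapsTo_invFunOn hw (hbij.mapsTo (mem_ball_self one_pos))
  rwa [hδ0, diskInvolution_zero] at this

theorem Complex.re_conj_mul (ζ v : ℂ) :
    (conj ζ * v).re = ‖ζ‖ * ‖v‖ * Real.cos (arg v - arg ζ) := by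
  rw [Real.cos_sub, mul_re, conj_re, conj_im, ← norm_mul_cos_arg ζ, ← norm_mul_cos_arg v,
    ← norm_mul_sin_arg ζ, ← norm_mul_sin_arg v]
  ring

section stolzAngle

variable {ζ z : ℂ} {α ρ : ℝ}

theorem norm_sub_mul_cos_le_one_sub_sq (hζ : ‖ζ‖ = 1) (hz : z ∈ stolzAngle ζ α ρ)
    (hα : α < Real.pi / 2) (hclose : ‖ζ - z‖ ≤ Real.cos α) :
    ‖ζ - z‖ * Real.cos α ≤ 1 - ‖z‖ ^ 2 := by
  have hcos : Real.cos α ≤ Real.cos (arg (ζ - z) - arg ζ) := by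
    rw [← Real.cos_abs (arg (ζ - z) - arg ζ), abs_sub_comm]
    exact Real.cos_le_cos_of_nonneg_of_le_pi (abs_nonneg _) (by linarith [Real.pi_pos])
      hz.2.1.le
  have hre : ‖ζ - z‖ * Real.cos α ≤ (conj ζ * (ζ - z)).re := by
    rw [Complex.re_conj_mul, hζ, one_mul]
    exact mul_le_mul_of_nonneg_left hcos (norm_nonneg _)
  have hnorm : ‖z‖ ^ 2 = 1 + ‖ζ - z‖ ^ 2 - 2 * (conj ζ * (ζ - z)).re := by
    have h := Complex.normSq_sub ζ (ζ - z)
    rw [sub_sub_cancel] at h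
    rw [Complex.sq_norm, Complex.sq_norm, h, ← Complex.sq_norm ζ, hζ, ← conj_re,
      map_mul, conj_conj, mul_comm]
    ring
  nlinarith [norm_nonneg (ζ - z)]

theorem norm_diskInvolution_le_of_mem_stolzAngle (hζ : ‖ζ‖ = 1) (hz : z ∈ stolzAngle ζ α ρ)
    (hα : α < Real.pi / 2) (hclose : ‖ζ - z‖ ≤ Real.cos α) :
    ‖diskInvolution (‖z‖ * ζ) z‖ ≤ √(4 / (4 + Real.cos α ^ 2)) := by
  have hcos : 0 < Real.cos α := Real.cos_pos_of_mem_Ioo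
    ⟨by linarith [Real.pi_pos, (abs_nonneg _).trans_lt hz.2.1], hα⟩
  set r := ‖z‖
  set v := ‖ζ - z‖
  have hr : r < 1 := mem_ball_zero_iff.1 hz.1
  have hr2 : 0 < 1 - r ^ 2 := by nlinarith [norm_nonneg z]
  have hbz : ‖(r : ℂ) * ζ - z‖ ≤ 2 * v := by
    have hbζ : ‖(r : ℂ) * ζ - ζ‖ = 1 - r := by
      rw [← sub_one_mul, norm_mul, hζ, mul_one, ← ofReal_one, ← ofReal_sub, norm_real,
        Real.norm_of_nonpos (by linarith), neg_sub]
    have hrv : 1 - r ≤ v := by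
      simpa [hζ] using norm_sub_norm_le ζ z
    calc ‖(r : ℂ) * ζ - z‖ ≤ ‖(r : ℂ) * ζ - ζ‖ + v := norm_sub_le_norm_sub_add_norm_sub _ _ _
      _ ≤ 2 * v := by linarith
  have hden : normSq (1 - conj ((r : ℂ) * ζ) * z) = ‖(r : ℂ) * ζ - z‖ ^ 2 + (1 - r ^ 2) ^ 2 := by
    rw [normSq_one_sub_conj_mul, ← Complex.sq_norm, ← Complex.sq_norm, ← Complex.sq_norm,
      norm_mul, norm_real, hζ, Real.norm_of_nonneg (norm_nonneg z)]
    ring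
  have hvr := norm_sub_mul_cos_le_one_sub_sq hζ hz hα hclose
  refine Real.le_sqrt_of_sq_le ?_
  rw [Complex.sq_norm, diskInvolution, normSq_div, hden, ← Complex.sq_norm,
    div_le_div_iff₀ (by positivity) (by positivity)]
  nlinarith [norm_nonneg ((r : ℂ) * ζ - z), mul_nonneg (norm_nonneg (ζ - z)) hcos.le,
    mul_le_mul hbz hbz (norm_nonneg _) (by positivity)]

end stolzAngle

/-- Near `b` the curve stays in a single sheet over a trivializing neighbourhood of `x`. -/
theorem IsCoveringMap.exists_tendsto_nhdsLT {E X : Type*} [TopologicalSpace E]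
    [TopologicalSpace X] {p : E → X} (hp : IsCoveringMap p) {q : ℝ → E} {a b : ℝ} (hab : a < b)
    (hq : ContinuousOn q (Ioo a b)) {x : X} (hpq : Tendsto (p ∘ q) (𝓝[<] b) (𝓝 x)) :
    ∃ e, Tendsto q (𝓝[<] b) (𝓝 e) := by
  have : Nonempty (p ⁻¹' {x}) := by
    obtain ⟨-, U, hxU, hU, -, H, -⟩ := hp x
    obtain ⟨t, ht⟩ := (hpq.eventually_mem (hU.mem_nhds hxU)).exists
    exact ⟨(H ⟨q t, ht⟩).2⟩
  have := (hp x).1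
  set T := (hp x).toTrivialization
  have hx : x ∈ T.baseSet := (hp x).mem_toTrivialization_baseSet
  obtain ⟨c, hcb, hsub⟩ := mem_nhdsLT_iff_exists_Ioo_subset.1
    (inter_mem (hpq (T.open_baseSet.mem_nhds hx)) (Ioo_mem_nhdsLT hab))
  have hsrc : MapsTo q (Ioo c b) T.source := fun t ht => T.mem_source.2 (hsub ht).1
  have hsheet : ContinuousOn (fun t => (T (q t)).2) (Ioo c b) :=
    continuous_snd.comp_continuousOn <|
      T.continuousOn_toFun.comp (f := q) (hq.mono fun t ht => (hsub ht).2) hsrc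
  have hmid : (c + b) / 2 ∈ Ioo c b := ⟨by linarith [mem_Iio.1 hcb], by linarith [mem_Iio.1 hcb]⟩
  set i := (T (q ((c + b) / 2))).2
  refine ⟨T.toOpenPartialHomeomorph.symm (x, i), ?_⟩
  have hlim := (T.toOpenPartialHomeomorph.continuousAt_symm (T.mem_target.2 hx)).tendsto.comp
    (hpq.prodMk_nhds (tendsto_const_nhds (x := i)))
  refine hlim.congr' ?_
  filter_upwards [Ioo_mem_nhdsLT hcb] with t ht
  have hconst : (T (q t)).2 = i := isPreconnected_Ioo.constant hsheet ht hmid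
  rw [Function.comp_apply, Function.comp_apply, ← hconst]
  exact T.symm_apply_mk_proj (hsrc ht)

theorem IsUniversalCovering.continuousOn {f : ℂ → RSphere} {Ω : Set RSphere}
    (hcov : IsUniversalCovering f Ω) : ContinuousOn f unitD :=
  continuousOn_iff_continuous_domRestrict.2 (continuous_subtype_val.comp hcov.covering.continuous)

theorem IsUniversalCovering.notMem_of_radialLimitAt {f : ℂ → RSphere} {Ω : Set RSphere}
    (hcov : IsUniversalCovering f Ω) {ζ : ℂ} (hζ : ‖ζ‖ = 1) {L : RSphere}
    (hL : radialLimitAt f ζ L) : L ∉ Ω := by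
  intro hLΩ
  have hball : ∀ t ∈ Ioo (0 : ℝ) 1, (t : ℂ) * ζ ∈ unitD := fun t ht => by
    rw [unitD, mem_ball_zero_iff, norm_mul, norm_real, hζ, mul_one, Real.norm_of_nonneg ht.1.le]
    exact ht.2
  let q : ℝ → unitD := fun t => if ht : t ∈ Ioo 0 1 then ⟨t * ζ, hball t ht⟩
    else ⟨0, mem_ball_self one_pos⟩
  have hqval : EqOn (fun t => (q t : ℂ)) (fun t : ℝ => (t : ℂ) * ζ) (Ioo 0 1) :=
    fun t ht => by simp only [q, dif_pos ht]
  have hqval' : (fun t => (q t : ℂ)) =ᶠ[𝓝[<] 1] fun t : ℝ => (t : ℂ) * ζ :=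
    mem_of_superset (Ioo_mem_nhdsLT zero_lt_one) hqval
  have hq : ContinuousOn q (Ioo 0 1) := Topology.IsInducing.subtypeVal.continuousOn_iff.2
    ((by fun_prop : Continuous fun t : ℝ => (t : ℂ) * ζ).continuousOn.congr hqval)
  have hpq : Tendsto ((fun z : unitD => (⟨f z, hcov.mapsTo z.2⟩ : Ω)) ∘ q) (𝓝[<] 1)
      (𝓝 ⟨L, hLΩ⟩) :=
    tendsto_subtype_rng.2 (hL.congr' (hqval'.fun_comp f).symm)
  obtain ⟨e, he⟩ := hcov.covering.exists_tendsto_nhdsLT zero_lt_one hq hpq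
  have hζe : Tendsto (fun t : ℝ => (t : ℂ) * ζ) (𝓝[<] 1) (𝓝 (e : ℂ)) :=
    ((continuous_subtype_val.tendsto e).comp he).congr' hqval'
  have hζζ : Tendsto (fun t : ℝ => (t : ℂ) * ζ) (𝓝[<] 1) (𝓝 ζ) :=
    ((by fun_prop : Continuous fun t : ℝ => (t : ℂ) * ζ).tendsto' 1 ζ (by simp)).mono_left
      nhdsWithin_le_nhds
  have he1 : ‖(e : ℂ)‖ < 1 := mem_ball_zero_iff.1 e.2
  rw [← tendsto_nhds_unique hζζ hζe, hζ] at he1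
  exact lt_irrefl 1 he1

theorem IsDeckTransformation.apply_mem_image_closedBall {f : ℂ → RSphere} {γ : ℂ → ℂ}
    (hγ : IsDeckTransformation f γ) {ζ : ℂ} (hζ : ‖ζ‖ = 1) {α ρ : ℝ}
    (hz : γ 0 ∈ stolzAngle ζ α ρ) (hα : α < Real.pi / 2) (hclose : ‖ζ - γ 0‖ ≤ Real.cos α) :
    f (‖γ 0‖ * ζ) ∈ f '' closedBall 0 √(4 / (4 + Real.cos α ^ 2)) := by
  have hw : (‖γ 0‖ : ℂ) * ζ ∈ ball (0 : ℂ) 1 := by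
    rw [mem_ball_zero_iff, norm_mul, norm_real, hζ, mul_one, norm_norm]
    exact mem_ball_zero_iff.1 hz.1
  obtain ⟨u, hu, hγu, hnorm⟩ := exists_preimage_norm_le_norm_diskInvolution hγ.holo hγ.bijOn hw
  refine ⟨u, mem_closedBall_zero_iff.2 ?_, by rw [← hγ.deck u hu, hγu]⟩
  exact hnorm.trans (norm_diskInvolution_le_of_mem_stolzAngle hζ hz hα hclose)

theorem IsUniversalCovering.mem_of_radialLimitAt {f : ℂ → RSphere} {Ω : Set RSphere}
    (hcov : IsUniversalCovering f Ω) {ζ : ℂ} (hζ : ζ ∈ ntLimitSet f) {L : RSphere}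
    (hL : radialLimitAt f ζ L) : L ∈ Ω := by
  obtain ⟨hζC, γ, hγ, hlim, α, ρ, -, hα, -, hstolz⟩ := hζ
  have hζ1 : ‖ζ‖ = 1 := mem_sphere_zero_iff_norm.1 hζC
  have hcos : 0 < Real.cos α := Real.cos_pos_of_mem_Ioo
    ⟨by linarith [Real.pi_pos, (abs_nonneg _).trans_lt (hstolz 0).2.1], hα⟩
  set k := √(4 / (4 + Real.cos α ^ 2))
  have hk : closedBall (0 : ℂ) k ⊆ unitD := closedBall_subset_ball <| (Real.sqrt_lt' one_pos).2 <|
    by rw [one_pow, div_lt_one (by positivity)]; linarith [pow_pos hcos 2]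
  have hK : IsCompact (f '' closedBall 0 k) :=
    (isCompact_closedBall 0 k).image_of_continuousOn (hcov.continuousOn.mono hk)
  have hmem : ∀ᶠ n in atTop, f (‖γ n 0‖ * ζ) ∈ f '' closedBall 0 k := by
    filter_upwards [Metric.tendsto_nhds.1 hlim _ hcos] with n hn
    rw [dist_comm, dist_eq_norm] at hn
    exact (hγ n).apply_mem_image_closedBall hζ1 (hstolz n) hα hn.le
  have hnorm : Tendsto (fun n => ‖γ n 0‖) atTop (𝓝[<] 1) :=
    tendsto_nhdsWithin_iff.2 ⟨hζ1 ▸ hlim.norm,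
      .of_forall fun n => mem_ball_zero_iff.1 (hstolz n).1⟩
  obtain ⟨z, hz, rfl⟩ := hK.isClosed.mem_of_tendsto (hL.comp hnorm) hmem
  exact hcov.mapsTo (hk hz)

theorem not_mem_ntLimitSet_of_hasRadialLimit_general (Ω : Set RSphere) (f : ℂ → RSphere)
    (hcov : IsUniversalCovering f Ω)
    (ζ : ℂ) (h : HasRadialLimit f ζ) :
    ζ ∉ ntLimitSet f := by
  intro hζ
  obtain ⟨L, hL⟩ := h
  exact hcov.notMem_of_radialLimitAt (mem_sphere_zero_iff_norm.1 hζ.1) hL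
    (hcov.mem_of_radialLimitAt hζ hL)

/-- If the radial limit of `π` exists at `ζ ∈ ∂𝔻`, then `ζ ∉ Λ_NT`. -/
theorem not_mem_ntLimitSet_of_hasRadialLimit (Ω : Set RSphere) (f : ℂ → RSphere)
    (hdom : IsSphDomain Ω) (hconn : ConnectivityGtTwo Ω)
    (hcov : IsUniversalCovering f Ω)
    (ζ : ℂ) (hζ : ζ ∈ unitC) (h : HasRadialLimit f ζ) :
    ζ ∉ ntLimitSet f :=
  not_mem_ntLimitSet_of_hasRadialLimit_general Ω f hcov ζ h
end
end

section
/- Let Ω ⊊ ℂ̂ be a domain (open connected subset of the Riemann sphere) with non-empty boundary. Then the set of points of ∂Ω that are accessible from Ω is dense in ∂Ω. -/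
open Complex Metric Set Filter Topology OnePoint MeasureTheory

noncomputable section

/-! A boundary point `p` is approached by a path in a small path-connected neighbourhood of `p`
starting inside `Ω`; the point where that path first leaves `Ω` lies on `∂Ω` and is reached by the
initial segment of the path, which runs in `Ω`. The Riemann sphere is locally path-connected, being
homeomorphic to the round sphere `S²`. -/

section FirstExit

variable {X : Type*} [TopologicalSpace X] {Ω : Set X}

theorem exists_first_exit {c : ℝ → X} (hc : Continuous c) (hΩ : IsOpen Ω) (h0 : c 0 ∈ Ω)
    (h1 : c 1 ∉ Ω) : ∃ s ∈ Ioc (0 : ℝ) 1, c s ∉ Ω ∧ MapsTo c (Ico 0 s) Ω := by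
  set S := Icc (0 : ℝ) 1 ∩ c ⁻¹' Ωᶜ
  have hS : IsCompact S := isCompact_Icc.inter_right (hΩ.isClosed_compl.preimage hc)
  have hSne : S.Nonempty := ⟨1, ⟨zero_le_one, le_rfl⟩, h1⟩
  obtain ⟨⟨hs0, hs1⟩, hsΩ⟩ := hS.sInf_mem hSne
  have hfirst : MapsTo c (Ico 0 (sInf S)) Ω := fun u ⟨hu0, hus⟩ => by
    by_contra hu
    exact (csInf_le hS.bddBelow ⟨⟨hu0, hus.le.trans hs1⟩, hu⟩).not_gt hus
  have hspos : 0 < sInf S := hs0.lt_of_ne fun h => hsΩ (h ▸ h0)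
  exact ⟨sInf S, ⟨hspos, hs1⟩, hsΩ, hfirst⟩

theorem mem_frontier_and_landing_of_first_exit {c : ℝ → X} (hc : Continuous c) (hΩ : IsOpen Ω)
    {s : ℝ} (hs : 0 < s) (hsΩ : c s ∉ Ω) (hfirst : MapsTo c (Ico 0 s) Ω) :
    c s ∈ frontier Ω ∧ ∃ η : ℝ → X, ContinuousOn η (Ico (0:ℝ) 1) ∧
      MapsTo η (Ico (0:ℝ) 1) Ω ∧ Tendsto η (𝓝[<] (1:ℝ)) (𝓝 (c s)) := by
  set η : ℝ → X := fun u => c (s * u)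
  have hη : Continuous η := hc.comp (continuous_const.mul continuous_id)
  have hηΩ : MapsTo η (Ico 0 1) Ω := fun u ⟨hu0, hu1⟩ =>
    hfirst ⟨mul_nonneg hs.le hu0, mul_lt_of_lt_one_right hs hu1⟩
  have hland : Tendsto η (𝓝[<] 1) (𝓝 (c s)) := by
    simpa [η] using (hη.tendsto 1).mono_left nhdsWithin_le_nhds
  have hclosure : c s ∈ closure Ω := mem_closure_of_tendsto hland <| by
    filter_upwards [Ico_mem_nhdsLT (show (0:ℝ) < 1 from one_pos)] with u hu using hηΩ hu
  exact ⟨hΩ.frontier_eq ▸ ⟨hclosure, hsΩ⟩, η, hη.continuousOn, hηΩ, hland⟩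

theorem IsOpen.frontier_subset_closure_landing [LocallyPathConnectedSpace X] (hΩ : IsOpen Ω) :
    frontier Ω ⊆ closure {p | p ∈ frontier Ω ∧ ∃ η : ℝ → X, ContinuousOn η (Ico (0:ℝ) 1) ∧
      MapsTo η (Ico (0:ℝ) 1) Ω ∧ Tendsto η (𝓝[<] (1:ℝ)) (𝓝 p)} := by
  intro p hp
  rw [mem_closure_iff_nhds_basis (path_connected_basis p)]
  rintro V ⟨hV, hVconn⟩
  obtain ⟨x, hxV, hxΩ⟩ := mem_closure_iff_nhds.1 (frontier_subset_closure hp) V hV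
  have hpΩ : p ∉ Ω := by rw [hΩ.frontier_eq] at hp; exact hp.2
  set γ := (hVconn.joinedIn x hxV p (mem_of_mem_nhds hV)).somePath
  obtain ⟨s, ⟨hs0, hs1⟩, hsΩ, hfirst⟩ :=
    exists_first_exit γ.continuous_extend hΩ (by simpa using hxΩ) (by simpa using hpΩ)
  refine ⟨γ.extend s, mem_frontier_and_landing_of_first_exit γ.continuous_extend hΩ hs0 hsΩ
    hfirst, ?_⟩
  rw [γ.extend_apply ⟨hs0.le, hs1⟩]
  exact JoinedIn.somePath_mem _ _

end FirstExit

instance : LocallyPathConnectedSpace RSphere :=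
  haveI : Fact (Module.finrank ℝ (EuclideanSpace ℝ (Fin 3)) = 2 + 1) := ⟨by simp⟩
  haveI := ChartedSpace.locallyPathConnectedSpace (EuclideanSpace ℝ (Fin 2))
    (sphere (0 : EuclideanSpace ℝ (Fin 3)) 1)
  (onePointEquivSphereOfFinrankEq (V := ℂ) (ι := Fin 3) (by simp)).isOpenEmbedding
    |>.locallyPathConnectedSpace

theorem accessiblePoints_dense_general (Ω : Set RSphere)
    (hdom : IsSphDomain Ω) :
    frontier Ω ⊆ closure {p : RSphere | AccessiblePoint Ω p} :=
  hdom.isOpen.frontier_subset_closure_landing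

/-- The accessible boundary points of a domain are dense in its
boundary. -/
theorem accessiblePoints_dense (Ω : Set RSphere)
    (hdom : IsSphDomain Ω) (hne : Ω ≠ univ) (hb : (frontier Ω).Nonempty) :
    frontier Ω ⊆ closure {p : RSphere | AccessiblePoint Ω p} :=
  accessiblePoints_dense_general Ω hdom
end
end
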